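/- Let X ⊆ Φ^+ and let v ∈ V be such that π_X(v) = 0, where π_X denotes the orthogonal projection of V onto Span_ℝ(X). Then there exist w ∈ W and I ⊆ [n] such that w·Span_ℝ(X) = Span_ℝ{α_i : i ∈ I} and ⟨wv, α_i^∨⟩ ≥ 0 for all i ∈ [n] (i.e., wv lies in the closed dominant cone P^ℝ_{≥0}). -/

import Mathlib

open RealInnerProductSpace Pointwise

/-- The covector `α^∨ := 2α/⟨α,α⟩` of a vector `α`. -/
noncomputable def corootOf {V : Type*} [NormedAddCommGroup V] [InnerProductSpace ℝ V]
    (α : V) : V := (2 / ⟪α, α⟫) • α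

/-- The reflection `s_α(u) := u - ⟨u,α^∨⟩α`. -/
noncomputable def rsReflect {V : Type*} [NormedAddCommGroup V] [InnerProductSpace ℝ V]
    (α u : V) : V := u - ⟪u, corootOf α⟫ • α

/-- An irreducible crystallographic reduced root system in a Euclidean space `V`,
together with a chosen base `α_1, …, α_n` of simple roots. -/
structure RootSystemData (V : Type*) [NormedAddCommGroup V] [InnerProductSpace ℝ V]
    (n : ℕ) where
  Φ : Set V
  finite : Φ.Finite
  nonzero : ∀ α ∈ Φ, α ≠ 0
  spans : Submodule.span ℝ Φ = ⊤
  reflect_mem : ∀ α ∈ Φ, ∀ β ∈ Φ, rsReflect α β ∈ Φ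
  reduced : ∀ α ∈ Φ, (Submodule.span ℝ {α} : Set V) ∩ Φ = {α, -α}
  crystal : ∀ α ∈ Φ, ∀ β ∈ Φ, ∃ z : ℤ, ⟪β, corootOf α⟫ = (z : ℝ)
  irred : ¬∃ Φ₁ Φ₂ : Set V, Φ₁.Nonempty ∧ Φ₂.Nonempty ∧ Φ₁ ∪ Φ₂ = Φ ∧
    Disjoint Φ₁ Φ₂ ∧ ∀ α ∈ Φ₁, ∀ β ∈ Φ₂, ⟪α, β⟫ = 0
  simple : Fin n → V
  simple_mem : ∀ i, simple i ∈ Φ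
  simple_indep : LinearIndependent ℝ simple
  simple_span : Submodule.span ℝ (Set.range simple) = ⊤
  root_combo : ∀ α ∈ Φ, (∃ c : Fin n → ℕ, α = ∑ i, (c i : ℝ) • simple i) ∨
    (∃ c : Fin n → ℕ, α = -∑ i, (c i : ℝ) • simple i)

namespace RootSystemData

variable {V : Type*} [NormedAddCommGroup V] [InnerProductSpace ℝ V] {n : ℕ}

/-- The set `Φ^+` of positive roots. -/
def Pos (R : RootSystemData V n) : Set V :=
  {α | α ∈ R.Φ ∧ ∃ c : Fin n → ℕ, α = ∑ i, (c i : ℝ) • R.simple i}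

/-- The Weyl group `W`, as the subgroup of linear automorphisms of `V` generated by
the reflections `s_α`, `α ∈ Φ`. -/
def weyl (R : RootSystemData V n) : Subgroup (V ≃ₗ[ℝ] V) :=
  Subgroup.closure {w | ∃ α ∈ R.Φ, ∀ u, w u = rsReflect α u}

/-- The Weyl group orbit `W(l)`. -/
def orbit (R : RootSystemData V n) (l : V) : Set V := {v | ∃ w ∈ R.weyl, v = w l}

/-- The permutohedron `Π(l) := ConvexHull W(l)`. -/
noncomputable def perm (R : RootSystemData V n) (l : V) : Set V := convexHull ℝ (R.orbit l)

/-- The root lattice `Q := Span_ℤ(Φ)`. -/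
def rootLattice (R : RootSystemData V n) : AddSubgroup V := AddSubgroup.closure R.Φ

/-- The coset `Q + l`. -/
def latticeCoset (R : RootSystemData V n) (l : V) : Set V := {v | v - l ∈ R.rootLattice}

/-- The discrete permutohedron `Π^Q(l) := Π(l) ∩ (Q + l)`. -/
noncomputable def permQ (R : RootSystemData V n) (l : V) : Set V :=
  R.perm l ∩ R.latticeCoset l

/-- The weight lattice `P`. -/
def weights (R : RootSystemData V n) : Set V :=
  {v | ∀ α ∈ R.Φ, ∃ z : ℤ, ⟪v, corootOf α⟫ = (z : ℝ)}

/-- A vector is dominant if it pairs nonnegatively with all simple coroots. -/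
def IsDomVec (R : RootSystemData V n) (v : V) : Prop :=
  ∀ i, 0 ≤ ⟪v, corootOf (R.simple i)⟫

/-- Dominant weights, i.e. elements of `P_{≥0}`. -/
def IsDominant (R : RootSystemData V n) (l : V) : Prop :=
  l ∈ R.weights ∧ R.IsDomVec l

/-- Root order: `μ ≤ l` iff `l − μ` is a nonnegative integer combination of simple roots. -/
def rootOrderLE (R : RootSystemData V n) (μ l : V) : Prop :=
  ∃ c : Fin n → ℕ, l - μ = ∑ i, (c i : ℝ) • R.simple i

/-- Membership in `ℕ[Φ]^W`: `W`-invariance of `k : Φ → ℕ`. -/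
def IsWInvariant (R : RootSystemData V n) (k : V → ℕ) : Prop :=
  ∀ w ∈ R.weyl, ∀ α ∈ R.Φ, k (w α) = k α

/-- Short roots: minimizers of the squared length. -/
def IsShort (R : RootSystemData V n) (α : V) : Prop :=
  α ∈ R.Φ ∧ ∀ β ∈ R.Φ, ⟪α, α⟫ ≤ ⟪β, β⟫

/-- Long roots: maximizers of the squared length. -/
def IsLong (R : RootSystemData V n) (α : V) : Prop :=
  α ∈ R.Φ ∧ ∀ β ∈ R.Φ, ⟪β, β⟫ ≤ ⟪α, α⟫

/-- Simply laced: all roots have the same length. -/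
def IsSimplyLaced (R : RootSystemData V n) : Prop :=
  ∀ α ∈ R.Φ, ∀ β ∈ R.Φ, ⟪α, α⟫ = ⟪β, β⟫

/-- `k ∈ ℕ[Φ]^W` is good if `Φ` is simply laced, or else `k` vanishing on short roots
implies it vanishes on long roots. -/
def IsGood (R : RootSystemData V n) (k : V → ℕ) : Prop :=
  R.IsSimplyLaced ∨ ((∀ α, R.IsShort α → k α = 0) → ∀ α, R.IsLong α → k α = 0)

/-- The symmetric interval-firing relation: `l → l + α` whenever
`⟨l + α/2, α^∨⟩ ∈ {−k(α), …, k(α)}`. -/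
def symFire (R : RootSystemData V n) (k : V → ℕ) (l m : V) : Prop :=
  ∃ α ∈ R.Pos, m = l + α ∧ ∃ z : ℤ,
    ⟪l + (2⁻¹ : ℝ) • α, corootOf α⟫ = (z : ℝ) ∧ -(k α : ℤ) ≤ z ∧ z ≤ (k α : ℤ)

/-- `ν` is the stabilization of `μ` for the symmetric interval-firing process. -/
def symStab (R : RootSystemData V n) (k : V → ℕ) (μ ν : V) : Prop :=
  Relation.ReflTransGen (R.symFire k) μ ν ∧ ∀ ξ, ¬ R.symFire k ν ξ

/-- The length of a Weyl group element: its number of inversions. -/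
noncomputable def len (R : RootSystemData V n) (w : V ≃ₗ[ℝ] V) : ℕ :=
  {α | α ∈ R.Pos ∧ w α ∉ R.Pos}.ncard

/-- `w` is the minimal length element of `W` such that `w⁻¹(l)` is dominant
(i.e. `w = w_l`). -/
def IsMinDomRep (R : RootSystemData V n) (l : V) (w : V ≃ₗ[ℝ] V) : Prop :=
  w ∈ R.weyl ∧ R.IsDomVec (w⁻¹ l) ∧
    ∀ w' ∈ R.weyl, R.IsDomVec (w'⁻¹ l) → R.len w ≤ R.len w'

/-- The fiber `(s^sym_𝐤)⁻¹(l)`: the set of weights whose symmetric interval-firing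
stabilization is `η_𝐤(l) = l + w_l(ρ_𝐤)`.  Here `ρk` is the vector `ρ_𝐤`. -/
def symFiber (R : RootSystemData V n) (k : V → ℕ) (ρk : V) (l : V) : Set V :=
  {μ | μ ∈ R.weights ∧ ∃ w, R.IsMinDomRep l w ∧ R.symStab k μ (l + w ρk)}

/-- The symmetric Ehrhart-like count `L^sym_l(𝐤)`. -/
noncomputable def symL (R : RootSystemData V n) (k : V → ℕ) (ρk : V) (l : V) : ℕ :=
  (R.symFiber k ρk l).ncard

/-- `I^{0,1}_l := {i : ⟨l, α_i^∨⟩ ∈ {0,1}}`. -/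
def I01 (R : RootSystemData V n) (l : V) : Set (Fin n) :=
  {i | ⟪l, corootOf (R.simple i)⟫ = 0 ∨ ⟪l, corootOf (R.simple i)⟫ = 1}

/-- The parabolic subgroup `W_I`. -/
def parabolic (R : RootSystemData V n) (I : Set (Fin n)) : Subgroup (V ≃ₗ[ℝ] V) :=
  Subgroup.closure {w | ∃ i ∈ I, ∀ u, w u = rsReflect (R.simple i) u}

/-- The parabolic sub-root system `Φ_I := Φ ∩ Span_ℝ{α_i : i ∈ I}`. -/
def parabolicRoots (R : RootSystemData V n) (I : Set (Fin n)) : Set V :=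
  R.Φ ∩ (Submodule.span ℝ (R.simple '' I) : Set V)

/-- The set `W^I` of minimal length representatives of the cosets of `W_I` in `W`. -/
noncomputable def minReps (R : RootSystemData V n) (I : Set (Fin n)) : Set (V ≃ₗ[ℝ] V) :=
  {w | w ∈ R.weyl ∧ ∀ w' ∈ R.weyl, w⁻¹ * w' ∈ R.parabolic I → R.len w ≤ R.len w'}

end RootSystemData

/-- The relative volume `rVol_Λ(X)` of a finite (linearly independent) set `X` with
respect to a lattice `Λ`: the number of `Λ`-points in the half-open parallelepiped
`Σ_{x ∈ X} [0, x)` (equivalently, the gcd of the maximal minors of the matrix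
expressing the elements of `X` in a basis of `Λ`). -/
noncomputable def rVol {V : Type*} [AddCommGroup V] [Module ℝ V]
    (Λ : AddSubgroup V) (X : Finset V) : ℕ :=
  {v : V | v ∈ Λ ∧ ∃ c : V → ℝ, (∀ x ∈ X, 0 ≤ c x ∧ c x < 1) ∧
    v = ∑ x ∈ X, c x • x}.ncard

/-!
Since `v ⊥ X`, perturb `v` inside `Span(X)ᗮ` to `y = v + t z`, with `z` generic so that the
roots orthogonal to `y` are exactly those in `Span(X)`, and `t > 0` so small that `⟪y, α⟫` has
the sign of `⟪v, α⟫` whenever the latter is nonzero. Choose `w ∈ W` with `w y` dominant; the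
sign condition makes `w v` dominant as well. As `X ⊆ Φ`, `Span(X)` is spanned by the roots it
contains, which `w` carries onto the roots orthogonal to the dominant vector `w y`. Writing
these as nonnegative combinations of simple roots shows that they span
`Span{α_i : ⟪w y, α_i⟫ = 0}`.
-/

section InnerProductSpace

variable {V : Type*} [NormedAddCommGroup V] [InnerProductSpace ℝ V]

lemma inner_corootOf (α u : V) : ⟪u, corootOf α⟫ = (2 / ⟪α, α⟫) * ⟪u, α⟫ :=
  real_inner_smul_right _ _ _

lemma inner_corootOf_nonneg_iff {α : V} (hα : α ≠ 0) (u : V) :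
    0 ≤ ⟪u, corootOf α⟫ ↔ 0 ≤ ⟪u, α⟫ := by
  rw [inner_corootOf, mul_nonneg_iff_of_pos_left]
  exact div_pos two_pos (real_inner_self_pos.mpr hα)

lemma rsReflect_rsReflect {α : V} (hα : α ≠ 0) (u : V) :
    rsReflect α (rsReflect α u) = u := by
  have h : ⟪α, α⟫ ≠ 0 := by simpa using hα
  simp only [rsReflect, inner_corootOf, inner_sub_left, real_inner_smul_left]
  field_simp
  module

lemma inner_rsReflect_rsReflect {α : V} (hα : α ≠ 0) (x y : V) :
    ⟪rsReflect α x, rsReflect α y⟫ = ⟪x, y⟫ := by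
  have h : ⟪α, α⟫ ≠ 0 := by simpa using hα
  simp only [rsReflect, inner_corootOf, inner_sub_left, inner_sub_right,
    real_inner_smul_left, real_inner_smul_right, real_inner_comm y α]
  field_simp
  ring

noncomputable def rsReflectEquiv {α : V} (hα : α ≠ 0) : V ≃ₗ[ℝ] V where
  toFun := rsReflect α
  invFun := rsReflect α
  map_add' _ _ := by
    simp only [rsReflect, inner_add_left, add_smul]
    abel
  map_smul' _ _ := by
    simp only [rsReflect, real_inner_smul_left, smul_sub, smul_smul]
    rfl
  left_inv := rsReflect_rsReflect hα
  right_inv := rsReflect_rsReflect hα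

lemma Submodule.exists_mem_orthogonal_forall_inner_ne_zero (U : Submodule ℝ V)
    [U.HasOrthogonalProjection] {S : Set V} (hS : S.Finite) :
    ∃ z ∈ Uᗮ, ∀ α ∈ S, α ∉ U → ⟪z, α⟫ ≠ 0 := by
  -- Otherwise the finitely many hyperplanes `α^⊥ ∩ Uᗮ` cover `Uᗮ`, so one of them is all of it.
  by_contra! hcover
  have : Finite {α // α ∈ S ∧ α ∉ U} := hS.subset (fun _ h => h.1) |>.to_subtype
  let hyperplane (α : {α // α ∈ S ∧ α ∉ U}) : Submodule ℝ Uᗮ :=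
    LinearMap.ker ((innerₛₗ ℝ (α : V)).comp Uᗮ.subtype)
  obtain ⟨⟨α, hαS, hαU⟩, htop⟩ :=
    Subspace.exists_eq_top_of_iUnion_eq_univ (p := hyperplane) <| by
      refine Set.eq_univ_of_forall fun z => ?_
      obtain ⟨α, hαS, hαU, hzα⟩ := hcover z z.2
      exact Set.mem_iUnion.mpr ⟨⟨α, hαS, hαU⟩, by simpa [hyperplane, real_inner_comm] using hzα⟩
  refine hαU (U.orthogonal_orthogonal ▸ fun z hz => ?_)
  rw [real_inner_comm]
  simpa [hyperplane] using htop.ge (Submodule.mem_top (x := ⟨z, hz⟩))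

open Filter Topology in
lemma exists_pos_forall_mul_inner_add_smul_pos {S : Set V} (hS : S.Finite) (v z : V) :
    ∃ t : ℝ, 0 < t ∧ ∀ α ∈ S, ⟪v, α⟫ ≠ 0 → 0 < ⟪v, α⟫ * ⟪v + t • z, α⟫ := by
  have hsmall : ∀ α ∈ S, ∀ᶠ t in 𝓝 (0 : ℝ), ⟪v, α⟫ ≠ 0 → 0 < ⟪v, α⟫ * ⟪v + t • z, α⟫ := by
    intro α _
    by_cases hvα : ⟪v, α⟫ = 0
    · exact .of_forall fun _ h => absurd hvα h
    have hcont : Continuous fun t : ℝ => ⟪v, α⟫ * ⟪v + t • z, α⟫ := by fun_prop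
    have h0 : 0 < ⟪v, α⟫ * ⟪v + (0 : ℝ) • z, α⟫ := by
      simpa using mul_self_pos.mpr hvα
    exact (continuousAt_const.eventually_lt hcont.continuousAt h0).mono fun _ h _ => h
  exact (eventually_mem_nhdsWithin.and
    (nhdsWithin_le_nhds (hS.eventually_all.mpr hsmall)) : ∀ᶠ t in 𝓝[>] (0 : ℝ), _).exists

lemma Submodule.exists_inner_eq_zero_iff_and_mul_inner_pos (U : Submodule ℝ V)
    [U.HasOrthogonalProjection] {S : Set V} (hS : S.Finite) {v : V} (hv : v ∈ Uᗮ) :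
    ∃ y : V, (∀ α ∈ S, ⟪y, α⟫ = 0 ↔ α ∈ U) ∧
      ∀ α ∈ S, ⟪v, α⟫ ≠ 0 → 0 < ⟪v, α⟫ * ⟪y, α⟫ := by
  obtain ⟨z, hz, hzS⟩ := U.exists_mem_orthogonal_forall_inner_ne_zero hS
  obtain ⟨t, ht, hsign⟩ := exists_pos_forall_mul_inner_add_smul_pos hS v z
  refine ⟨v + t • z, fun α hα => ⟨fun h0 => ?_, fun hαU => ?_⟩, hsign⟩
  · by_contra hαU
    by_cases hvα : ⟪v, α⟫ = 0
    · rw [inner_add_left, hvα, zero_add, real_inner_smul_left] at h0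
      exact hzS α hα hαU ((mul_eq_zero.mp h0).resolve_left ht.ne')
    · simpa [h0] using hsign α hα hvα
  · rw [inner_add_left, real_inner_smul_left, real_inner_comm,
      U.inner_right_of_mem_orthogonal hαU hv, real_inner_comm,
      U.inner_right_of_mem_orthogonal hαU hz, mul_zero, add_zero]

end InnerProductSpace

namespace RootSystemData

variable {V : Type*} [NormedAddCommGroup V] [InnerProductSpace ℝ V] {n : ℕ}
  (R : RootSystemData V n)

lemma isDomVec_iff {y : V} : R.IsDomVec y ↔ ∀ i, 0 ≤ ⟪y, R.simple i⟫ :=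
  forall_congr' fun i => inner_corootOf_nonneg_iff (R.nonzero _ (R.simple_mem i)) y

lemma rsReflectEquiv_mem_weyl {α : V} (hα : α ∈ R.Φ) :
    rsReflectEquiv (R.nonzero α hα) ∈ R.weyl :=
  Subgroup.subset_closure ⟨α, hα, fun _ => rfl⟩

lemma weyl_le_stabilizer : R.weyl ≤ MulAction.stabilizer (V ≃ₗ[ℝ] V) R.Φ := by
  refine Subgroup.closure_le _ |>.mpr fun s ⟨α, hα, hs⟩ => ?_
  have hmaps : Set.MapsTo s R.Φ R.Φ := fun β hβ => hs β ▸ R.reflect_mem α hα β hβ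
  refine MulAction.mem_stabilizer_iff.mpr (hmaps.image_subset.antisymm fun β hβ => ?_)
  refine ⟨s β, hmaps hβ, ?_⟩
  rw [hs, hs, rsReflect_rsReflect (R.nonzero α hα)]

lemma weyl_apply_mem {w : V ≃ₗ[ℝ] V} (hw : w ∈ R.weyl) {α : V} (hα : α ∈ R.Φ) :
    w α ∈ R.Φ := by
  rw [← MulAction.mem_stabilizer_iff.mp (R.weyl_le_stabilizer hw)]
  exact Set.smul_mem_smul_set hα

lemma inner_weyl_apply {w : V ≃ₗ[ℝ] V} (hw : w ∈ R.weyl) (x y : V) :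
    ⟪w x, w y⟫ = ⟪x, y⟫ := by
  induction hw using Subgroup.closure_induction generalizing x y with
  | mem s hs =>
    obtain ⟨α, hα, hs⟩ := hs
    rw [hs, hs, inner_rsReflect_rsReflect (R.nonzero α hα)]
  | one => rfl
  | mul a b _ _ ha hb => exact (ha _ _).trans (hb x y)
  | inv a _ ha => simpa using (ha (a⁻¹ x) (a⁻¹ y)).symm

lemma inner_weyl_apply_eq_inner_inv_apply {w : V ≃ₗ[ℝ] V} (hw : w ∈ R.weyl) (x y : V) :
    ⟪w x, y⟫ = ⟪x, w⁻¹ y⟫ := by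
  simpa using (R.inner_weyl_apply (inv_mem hw) (w x) y).symm

instance finite_weyl : Finite R.weyl := by
  have : Finite R.Φ := R.finite.to_subtype
  refine Finite.of_injective
    (fun (w : R.weyl) (α : R.Φ) => (⟨w.1 α, R.weyl_apply_mem w.2 α.2⟩ : R.Φ)) fun w w' h => ?_
  refine Subtype.ext <| LinearEquiv.toLinearMap_injective <| LinearMap.ext_on R.spans ?_
  exact fun α hα => congrArg Subtype.val (congrFun h ⟨α, hα⟩)

lemma exists_inner_simple_eq_one [FiniteDimensional ℝ V] :
    ∃ ρ : V, ∀ i, ⟪R.simple i, ρ⟫ = 1 := by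
  let b : Module.Basis (Fin n) ℝ V := .mk R.simple_indep R.simple_span.ge
  refine ⟨(InnerProductSpace.toDual ℝ V).symm (LinearMap.toContinuousLinearMap b.sumCoords),
    fun i => ?_⟩
  rw [real_inner_comm, InnerProductSpace.toDual_symm_apply]
  simpa [b] using b.sumCoords_self_apply (i := i)

lemma exists_isDomVec_weyl_apply [FiniteDimensional ℝ V] (x : V) :
    ∃ w ∈ R.weyl, R.IsDomVec (w x) := by
  obtain ⟨ρ, hρ⟩ := R.exists_inner_simple_eq_one
  obtain ⟨⟨w, hw⟩, hmax⟩ := Finite.exists_max fun w : R.weyl => ⟪w.1 x, ρ⟫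
  -- `s_i` changes `⟪w x, ρ⟫` by `-⟪w x, α_i^∨⟫`, so the maximality of `w` gives dominance.
  refine ⟨w, hw, fun i => ?_⟩
  have := hmax ⟨_, mul_mem (R.rsReflectEquiv_mem_weyl (R.simple_mem i)) hw⟩
  simpa [rsReflectEquiv, rsReflect, inner_sub_left, real_inner_smul_left, hρ] using this

lemma mem_span_simple_of_isDomVec {y : V} (hy : R.IsDomVec y) {α : V} (hα : α ∈ R.Φ)
    (h0 : ⟪y, α⟫ = 0) : α ∈ Submodule.span ℝ (R.simple '' {i | ⟪y, R.simple i⟫ = 0}) := by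
  suffices key : ∀ c : Fin n → ℕ, ⟪y, ∑ i, (c i : ℝ) • R.simple i⟫ = 0 →
      ∑ i, (c i : ℝ) • R.simple i ∈ Submodule.span ℝ (R.simple '' {i | ⟪y, R.simple i⟫ = 0}) by
    rcases R.root_combo α hα with ⟨c, rfl⟩ | ⟨c, rfl⟩
    · exact key c h0
    · exact neg_mem (key c (by simpa using h0))
  intro c hc
  simp only [inner_sum, real_inner_smul_right] at hc
  have hterm := (Finset.sum_eq_zero_iff_of_nonneg fun i _ =>
    mul_nonneg (Nat.cast_nonneg (c i)) (R.isDomVec_iff.mp hy i)).mp hc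
  refine Submodule.sum_mem _ fun i _ => ?_
  rcases mul_eq_zero.mp (hterm i (Finset.mem_univ i)) with hci | hyi
  · simp [hci]
  · exact Submodule.smul_mem _ _ (Submodule.subset_span ⟨i, hyi, rfl⟩)

lemma span_roots_inner_eq_zero_of_isDomVec {y : V} (hy : R.IsDomVec y) :
    Submodule.span ℝ {α | α ∈ R.Φ ∧ ⟪y, α⟫ = 0} =
      Submodule.span ℝ (R.simple '' {i | ⟪y, R.simple i⟫ = 0}) :=
  le_antisymm (Submodule.span_le.mpr fun _ ⟨hα, h0⟩ => R.mem_span_simple_of_isDomVec hy hα h0)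
    (Submodule.span_mono fun _ ⟨i, hi, hα⟩ => hα ▸ ⟨R.simple_mem i, hi⟩)

lemma image_roots_inner_eq_zero {w : V ≃ₗ[ℝ] V} (hw : w ∈ R.weyl) (y : V) :
    w '' {α | α ∈ R.Φ ∧ ⟪y, α⟫ = 0} = {α | α ∈ R.Φ ∧ ⟪w y, α⟫ = 0} := by
  ext β
  constructor
  · rintro ⟨α, ⟨hα, h0⟩, rfl⟩
    exact ⟨R.weyl_apply_mem hw hα, (R.inner_weyl_apply hw y α).trans h0⟩
  · rintro ⟨hβ, h0⟩
    refine ⟨w⁻¹ β, ⟨R.weyl_apply_mem (inv_mem hw) hβ, ?_⟩, w.apply_symm_apply β⟩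
    exact (R.inner_weyl_apply_eq_inner_inv_apply hw y β).symm.trans h0

lemma isDomVec_of_mul_inner_pos {v y : V}
    (hsign : ∀ α ∈ R.Φ, ⟪v, α⟫ ≠ 0 → 0 < ⟪v, α⟫ * ⟪y, α⟫) {w : V ≃ₗ[ℝ] V} (hw : w ∈ R.weyl)
    (hy : R.IsDomVec (w y)) : R.IsDomVec (w v) := by
  rw [isDomVec_iff] at hy ⊢
  intro i
  have hβ := R.weyl_apply_mem (inv_mem hw) (R.simple_mem i)
  have hyi := hy i
  rw [R.inner_weyl_apply_eq_inner_inv_apply hw] at hyi ⊢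
  by_contra! hneg
  nlinarith [hsign _ hβ hneg.ne]

end RootSystemData

/-- Proposition 2.1: if `π_X(v) = 0` then some `w ∈ W` carries
`Span_ℝ(X)` to a parabolic subspace while making `v` dominant. -/
theorem parabolic_subspace {V : Type*} [NormedAddCommGroup V] [InnerProductSpace ℝ V]
    [FiniteDimensional ℝ V]
    {n : ℕ} (R : RootSystemData V n) (X : Set V) (hX : X ⊆ R.Pos) (v : V)
    (hv : ((Submodule.orthogonalProjection (Submodule.span ℝ X) v : Submodule.span ℝ X) : V) = 0) :
    ∃ w ∈ R.weyl, ∃ I : Set (Fin n),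
      ⇑w '' (Submodule.span ℝ X : Set V) = (Submodule.span ℝ (R.simple '' I) : Set V) ∧
      R.IsDomVec (w v) := by
  set U := Submodule.span ℝ X
  have hvU : v ∈ Uᗮ := U.orthogonalProjectionOnto_eq_zero_iff.mp (ZeroMemClass.coe_eq_zero.mp hv)
  obtain ⟨y, hyU, hsign⟩ := U.exists_inner_eq_zero_iff_and_mul_inner_pos R.finite hvU
  obtain ⟨w, hw, hdom⟩ := R.exists_isDomVec_weyl_apply y
  refine ⟨w, hw, {i | ⟪w y, R.simple i⟫ = 0}, ?_, R.isDomVec_of_mul_inner_pos hsign hw hdom⟩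
  have hU : U = Submodule.span ℝ {α | α ∈ R.Φ ∧ ⟪y, α⟫ = 0} := by
    refine le_antisymm (Submodule.span_mono fun x hx => ⟨(hX hx).1, ?_⟩) ?_
    · exact (hyU x (hX hx).1).mpr (Submodule.subset_span hx)
    · exact Submodule.span_le.mpr fun α ⟨hα, h0⟩ => (hyU α hα).mp h0
  rw [← R.span_roots_inner_eq_zero_of_isDomVec hdom, ← R.image_roots_inner_eq_zero hw, hU,
    ← LinearEquiv.coe_coe, ← Submodule.map_coe, Submodule.map_span]
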